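/- Suppose ads i and i' satisfy q_i < 1, q_{i'} < 1, and e_i/(1 − q_i) < e_{i'}/(1 − q_{i'}). Then for any lists X and Y with q(X) > 0, the list X ++ [i', i] ++ Y has strictly greater efficiency than X ++ [i, i'] ++ Y. (Hence in an efficiency-maximizing assignment, the placed ads are sorted in decreasing order of adjusted ecpm a_i = e_i/(1 − q_i).) -/
import Mathlib


noncomputable section

/-- Efficiency of an ordered list of ads `(e, q)`. -/
def eff : List (ℝ × ℝ) → ℝ
  | [] => 0
  | a :: L => a.1 + a.2 * eff L

/-- Product of continuation probabilities of a list of ads. -/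
def qprod (L : List (ℝ × ℝ)) : ℝ := (L.map Prod.snd).prod

theorem eff_append (A B : List (ℝ × ℝ)) :
    eff (A ++ B) = eff A + qprod A * eff B := by
  induction A with
  | nil => simp [eff, qprod]
  | cons a L ih =>
    simp [eff, qprod, List.map_cons, List.prod_cons] at *
    rw [ih]; ring

/-- If `a_i = e_i/(1−q_i) < e_{i'}/(1−q_{i'}) = a_{i'}`, then placing `i'` before `i`
is strictly more efficient, for any surrounding lists with positive prefix probability. -/
theorem sort_by_adjusted_ecpm
    (X Y : List (ℝ × ℝ)) (i i' : ℝ × ℝ)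
    (hi : 0 ≤ i.1 ∧ 0 ≤ i.2 ∧ i.2 < 1)
    (hi' : 0 ≤ i'.1 ∧ 0 ≤ i'.2 ∧ i'.2 < 1)
    (hX : ∀ a ∈ X, 0 ≤ a.1 ∧ 0 ≤ a.2 ∧ a.2 < 1)
    (hY : ∀ a ∈ Y, 0 ≤ a.1 ∧ 0 ≤ a.2 ∧ a.2 < 1)
    (hqX : 0 < qprod X)
    (ha : i.1 / (1 - i.2) < i'.1 / (1 - i'.2)) :
    eff (X ++ [i', i] ++ Y) > eff (X ++ [i, i'] ++ Y) := by
  obtain ⟨he, hq0, hq1⟩ := hi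
  obtain ⟨he', hq0', hq1'⟩ := hi'
  have h1 : (0:ℝ) < 1 - i.2 := by linarith
  have h1' : (0:ℝ) < 1 - i'.2 := by linarith
  have key : i.1 * (1 - i'.2) < i'.1 * (1 - i.2) :=
    (div_lt_div_iff₀ h1 h1').mp ha
  simp only [List.append_assoc, eff_append]
  have : eff [i, i'] + qprod [i, i'] * eff Y <
      eff [i', i] + qprod [i', i] * eff Y := by
    simp only [eff, qprod, List.map_cons, List.map_nil, List.prod_cons, List.prod_nil]
    nlinarith
  nlinarith
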